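/- arXiv:2107.08436 — 6 statements merged into one kernel-verified Lean document; each statement's English description precedes it below -/
import Mathlib

section
/- If the infinite Hessenberg-type matrix H with first column (d_0, d_1, d_2, ...) and whose (i,j)-entry for j ≥ 1 equals h_{i-j+1} (with h_m = 0 for m < 0) is totally positive, then the Riordan array R(d(t), h(t)), i.e., the matrix whose (n,k)-entry is the coefficient of t^n in d(t)·h(t)^k, is totally positive. -/
open PowerSeries

noncomputable section

/-- An infinite real matrix is totally positive if every finite minor
(with strictly increasing row and column indices) is nonnegative. -/
def TotallyPos (M : ℕ → ℕ → ℝ) : Prop :=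
  ∀ (k : ℕ) (r c : Fin k → ℕ), StrictMono r → StrictMono c →
    0 ≤ (Matrix.of fun i j => M (r i) (c j)).det

/-- The Riordan array R(d(t), h(t)): entry (n,k) is the coefficient of t^n in d * h^k. -/
def riordan (d h : PowerSeries ℝ) (n k : ℕ) : ℝ :=
  PowerSeries.coeff n (d * h ^ k)

/-- The lower triangular Toeplitz matrix of a sequence. -/
def toeplitz (a : ℕ → ℝ) (i j : ℕ) : ℝ :=
  if j ≤ i then a (i - j) else 0

/-- The Hessenberg matrix: first column (d₀,d₁,…), and entry (i,j) = h_{i-j+1} for j ≥ 1. -/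
def hess (d h : ℕ → ℝ) (i j : ℕ) : ℝ :=
  if j = 0 then d i else if j ≤ i + 1 then h (i + 1 - j) else 0

/-! The Riordan array satisfies `R = H · (1 ⊕ R)`: column `0` of `R` is `d`, and column `k + 1`
is the convolution of `h` with column `k`. Row `i` of `H` vanishes beyond column `i + 1`, so a minor
of `R` is the determinant of a product of a finite block of rows of `H` with a finite block of
`1 ⊕ R`, and the Cauchy–Binet formula writes it as a sum of products of minors of `H` and of
`1 ⊕ R`. The columns `< m + 1` of `1 ⊕ R` only involve the columns `< m` of `R`, so induction on
a bound for the column indices shows that every minor of `R` is nonnegative. -/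

open Finset Matrix Equiv

theorem Finset.sum_injective_eq_sum_strictMono_sum_perm {k : ℕ} {ι M : Type*} [LinearOrder ι]
    [Fintype ι] [AddCommMonoid M] [DecidablePred (Function.Injective : (Fin k → ι) → Prop)]
    [DecidablePred (StrictMono : (Fin k → ι) → Prop)] (g : (Fin k → ι) → M) :
    ∑ p : Fin k → ι with Function.Injective p, g p
      = ∑ f : Fin k → ι with StrictMono f, ∑ τ : Perm (Fin k), g (f ∘ τ) := by
  rw [← Finset.sum_product']
  symm
  refine Finset.sum_nbij' (fun x => x.1 ∘ x.2)
    (fun p => (p ∘ Tuple.sort p, (Tuple.sort p)⁻¹)) ?_ ?_ ?_ ?_ ?_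
  · rintro ⟨f, τ⟩ hx
    simp only [mem_product, mem_filter_univ] at hx ⊢
    exact hx.1.injective.comp τ.injective
  · intro p hp
    simp only [mem_product, mem_filter_univ, mem_univ, and_true] at hp ⊢
    exact (Tuple.monotone_sort p).strictMono_of_injective (hp.comp (Tuple.sort p).injective)
  · rintro ⟨f, τ⟩ hx
    simp only [mem_product, mem_filter_univ] at hx
    have hsorted : (f ∘ τ) ∘ Tuple.sort (f ∘ τ) = f := by
      rw [Tuple.comp_perm_comp_sort_eq_comp_sort,
        Tuple.sort_eq_refl_iff_monotone.2 hx.1.monotone, coe_refl, Function.comp_id]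
    have hτ : τ * Tuple.sort (f ∘ τ) = 1 := by
      ext i
      exact congrArg Fin.val (hx.1.injective (congrFun hsorted i))
    exact Prod.ext hsorted (by simp [eq_inv_of_mul_eq_one_right hτ])
  · intro p _
    simp [Function.comp_assoc]
  · intro x _
    rfl

theorem StrictMono.exists_eq_add_one {k : ℕ} {r : Fin k → ℕ} (hr : StrictMono r)
    (h0 : ∀ i, r i ≠ 0) : ∃ r' : Fin k → ℕ, StrictMono r' ∧ r = fun i => r' i + 1 :=
  ⟨fun i => r i - 1, fun a b hab => show r a - 1 < r b - 1 by have := hr hab; have := h0 a; omega,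
    funext fun i => show r i = r i - 1 + 1 by have := h0 i; omega⟩

namespace Matrix

variable {R : Type*} [CommRing R]

theorem det_mul_eq_sum_prod_mul_det_submatrix {m ι : Type*} [Fintype m] [DecidableEq m]
    [Fintype ι] (A : Matrix m ι R) (B : Matrix ι m R) :
    (A * B).det = ∑ p : m → ι, (∏ i, A i (p i)) * (B.submatrix p id).det := by
  have hrows : A * B = fun i => ∑ x, A i x • B x := by
    ext i j
    simp [mul_apply, Finset.sum_apply]
  classical
  calc (A * B).det = detRowAlternating fun i => ∑ x, A i x • B x := by rw [hrows]; rfl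
    _ = ∑ p : m → ι, detRowAlternating fun i => A i (p i) • B (p i) :=
      MultilinearMap.map_sum _ _
    _ = _ := Finset.sum_congr rfl fun p _ => MultilinearMap.map_smul_univ _ _ _

theorem sum_perm_prod_mul_det_submatrix_comp {m ι : Type*} [Fintype m] [DecidableEq m]
    (A : Matrix m ι R) (B : Matrix ι m R) (f : m → ι) :
    ∑ τ : Perm m, (∏ i, A i (f (τ i))) * (B.submatrix (f ∘ τ) id).det
      = (A.submatrix id f).det * (B.submatrix f id).det := by
  have hB : ∀ τ : Perm m, B.submatrix (f ∘ τ) id = (B.submatrix f id).submatrix τ id :=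
    fun τ => rfl
  simp_rw [hB, det_permute, ← mul_assoc, ← Finset.sum_mul]
  congr 1
  rw [← det_transpose, det_apply']
  simp [mul_comm]

theorem det_submatrix_eq_zero_of_not_injective {m ι : Type*} [Fintype m] [DecidableEq m]
    (B : Matrix ι m R) {p : m → ι} (hp : ¬Function.Injective p) :
    (B.submatrix p id).det = 0 := by
  obtain ⟨i, j, hpij, hij⟩ := Function.not_injective_iff.1 hp
  exact det_zero_of_row_eq hij (funext fun l => by simp [hpij])

/-- The Cauchy–Binet formula. -/
theorem det_mul_eq_sum_strictMono {k : ℕ} {ι : Type*} [Fintype ι] [LinearOrder ι]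
    [DecidablePred (StrictMono : (Fin k → ι) → Prop)] (A : Matrix (Fin k) ι R)
    (B : Matrix ι (Fin k) R) :
    (A * B).det = ∑ f : Fin k → ι with StrictMono f,
      (A.submatrix id f).det * (B.submatrix f id).det := by
  classical
  have hinj : ∀ p : Fin k → ι, (∏ i, A i (p i)) * (B.submatrix p id).det ≠ 0 →
      Function.Injective p := fun p hp => by
    by_contra hnot
    exact hp (by rw [det_submatrix_eq_zero_of_not_injective B hnot, mul_zero])
  rw [det_mul_eq_sum_prod_mul_det_submatrix, ← sum_filter_of_ne fun p _ => hinj p,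
    sum_injective_eq_sum_strictMono_sum_perm]
  exact sum_congr rfl fun f _ => sum_perm_prod_mul_det_submatrix_comp A B f

theorem det_mul_nonneg_of_minors_nonneg [PartialOrder R] [IsOrderedRing R] {k : ℕ} {ι : Type*}
    [Fintype ι] [LinearOrder ι] (A : Matrix (Fin k) ι R) (B : Matrix ι (Fin k) R)
    (hA : ∀ f : Fin k → ι, StrictMono f → 0 ≤ (A.submatrix id f).det)
    (hB : ∀ f : Fin k → ι, StrictMono f → 0 ≤ (B.submatrix f id).det) :
    0 ≤ (A * B).det := by
  classical
  rw [det_mul_eq_sum_strictMono]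
  exact sum_nonneg fun f hf => mul_nonneg (hA f (mem_filter.1 hf).2) (hB f (mem_filter.1 hf).2)

theorem det_succ_of_row_zero_eq_single {k : ℕ} (Q : Matrix (Fin (k + 1)) (Fin (k + 1)) R)
    (h00 : Q 0 0 = 1) (h0 : ∀ j : Fin k, Q 0 j.succ = 0) :
    Q.det = (Q.submatrix Fin.succ Fin.succ).det := by
  rw [det_succ_row_zero, Fin.sum_univ_succ]
  simp [h00, h0]

end Matrix

def oneDirectSum (M : ℕ → ℕ → ℝ) : ℕ → ℕ → ℝ
  | 0, 0 => 1
  | i + 1, j + 1 => M i j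
  | _, _ => 0

def TotallyPosOnCols (m : ℕ) (M : ℕ → ℕ → ℝ) : Prop :=
  ∀ (k : ℕ) (r c : Fin k → ℕ), StrictMono r → StrictMono c → (∀ j, c j < m) →
    0 ≤ (Matrix.of fun i j => M (r i) (c j)).det

theorem totallyPosOnCols_zero (M : ℕ → ℕ → ℝ) : TotallyPosOnCols 0 M := by
  rintro (_ | k) r c - - hcm
  · simp
  · exact absurd (hcm 0) (Nat.not_lt_zero _)

theorem TotallyPos.of_forall_totallyPosOnCols {M : ℕ → ℕ → ℝ}
    (hM : ∀ m, TotallyPosOnCols m M) : TotallyPos M := fun k r c hr hc =>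
  hM (univ.sup c + 1) k r c hr hc fun j => Nat.lt_succ_of_le (le_sup (mem_univ j))

section oneDirectSum

variable {m : ℕ} {M : ℕ → ℕ → ℝ}

@[simp]
theorem oneDirectSum_zero_zero : oneDirectSum M 0 0 = 1 := rfl

@[simp]
theorem oneDirectSum_succ_succ (i j : ℕ) : oneDirectSum M (i + 1) (j + 1) = M i j := rfl

theorem oneDirectSum_zero_left {j : ℕ} (hj : j ≠ 0) : oneDirectSum M 0 j = 0 := by
  cases j <;> trivial

theorem oneDirectSum_zero_right {i : ℕ} (hi : i ≠ 0) : oneDirectSum M i 0 = 0 := by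
  cases i <;> trivial

theorem oneDirectSum_minor_nonneg_of_ne_zero (hM : TotallyPosOnCols m M) {k : ℕ}
    {r c : Fin k → ℕ} (hr : StrictMono r) (hc : StrictMono c) (hr0 : ∀ i, r i ≠ 0)
    (hc0 : ∀ j, c j ≠ 0) (hcm : ∀ j, c j < m + 1) :
    0 ≤ (Matrix.of fun i j => oneDirectSum M (r i) (c j)).det := by
  obtain ⟨r', hr', rfl⟩ := hr.exists_eq_add_one hr0
  obtain ⟨c', hc', rfl⟩ := hc.exists_eq_add_one hc0
  exact hM k r' c' hr' hc' fun j => Nat.lt_of_succ_lt_succ (hcm j)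

theorem TotallyPosOnCols.oneDirectSum (hM : TotallyPosOnCols m M) :
    TotallyPosOnCols (m + 1) (oneDirectSum M) := by
  rintro (_ | k) r c hr hc hcm
  · simp
  have hr_succ : ∀ i : Fin k, r i.succ ≠ 0 := fun i => (hr (Fin.succ_pos i)).ne_bot
  have hc_succ : ∀ j : Fin k, c j.succ ≠ 0 := fun j => (hc (Fin.succ_pos j)).ne_bot
  have hr_pos : r 0 ≠ 0 → ∀ i, r i ≠ 0 := fun h i => Fin.cases h hr_succ i
  have hc_pos : c 0 ≠ 0 → ∀ j, c j ≠ 0 := fun h j => Fin.cases h hc_succ j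
  by_cases hr0 : r 0 = 0 <;> by_cases hc0 : c 0 = 0
  · rw [det_succ_of_row_zero_eq_single _ (by simp [hr0, hc0])
      fun j => by simp [hr0, oneDirectSum_zero_left (hc_succ j)]]
    exact oneDirectSum_minor_nonneg_of_ne_zero hM (hr.comp (Fin.strictMono_succ))
      (hc.comp (Fin.strictMono_succ)) hr_succ hc_succ fun j => hcm j.succ
  · exact (det_eq_zero_of_row_eq_zero 0 fun j => by
      simp [hr0, oneDirectSum_zero_left (hc_pos hc0 j)]).ge
  · exact (det_eq_zero_of_column_eq_zero 0 fun i => by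
      simp [hc0, oneDirectSum_zero_right (hr_pos hr0 i)]).ge
  · exact oneDirectSum_minor_nonneg_of_ne_zero hM hr hc (hr_pos hr0) (hc_pos hc0) hcm

end oneDirectSum

section riordan

variable (d h : ℕ → ℝ)

theorem hess_succ (i j : ℕ) : hess d h i (j + 1) = toeplitz h i j := by
  simp only [hess, toeplitz, Nat.add_one_ne_zero, if_false, Nat.add_le_add_iff_right,
    Nat.add_sub_add_right]

theorem riordan_zero (n : ℕ) : riordan (mk d) (mk h) n 0 = d n := by
  simp [riordan]

theorem riordan_succ {n N : ℕ} (hn : n ≤ N) (k : ℕ) :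
    riordan (mk d) (mk h) n (k + 1)
      = ∑ j ∈ range (N + 1), toeplitz h n j * riordan (mk d) (mk h) j k := by
  have hvanish : ∀ j ∈ range (N + 1), j ∉ range (n + 1) →
      toeplitz h n j * riordan (mk d) (mk h) j k = 0 := fun j _ hj => by
    simp only [mem_range] at hj
    simp [toeplitz, show ¬j ≤ n by omega]
  rw [← sum_subset (range_subset_range.2 (by omega)) hvanish, riordan, pow_succ, ← mul_assoc,
    coeff_mul, Nat.sum_antidiagonal_eq_sum_range_succ fun i j => coeff i _ * coeff j _]
  refine sum_congr rfl fun j hj => ?_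
  rw [toeplitz, if_pos (Nat.lt_succ_iff.1 (mem_range.1 hj)), coeff_mk, mul_comm, riordan]

theorem riordan_eq_sum_hess_mul_oneDirectSum {n N : ℕ} (hn : n ≤ N) (c : ℕ) :
    riordan (mk d) (mk h) n c
      = ∑ x : Fin (N + 2), hess d h n x * oneDirectSum (riordan (mk d) (mk h)) x c := by
  rw [Fin.sum_univ_succ]
  cases c with
  | zero => simp [riordan_zero, hess, oneDirectSum_zero_right]
  | succ k =>
    simp only [Fin.val_zero, Fin.val_succ, hess_succ, oneDirectSum_succ_succ,
      oneDirectSum_zero_left k.succ_ne_zero, mul_zero, zero_add]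
    rw [riordan_succ d h hn,
      Fin.sum_univ_eq_sum_range (fun x => toeplitz h n x * riordan (mk d) (mk h) x k)]

end riordan

theorem totallyPosOnCols_riordan (d h : ℕ → ℝ) (hH : TotallyPos (hess d h)) (m : ℕ) :
    TotallyPosOnCols m (riordan (mk d) (mk h)) := by
  induction m with
  | zero => exact totallyPosOnCols_zero _
  | succ m ih =>
    intro k r c hr hc hcm
    set N := univ.sup r
    have hfactor : (Matrix.of fun i j => riordan (mk d) (mk h) (r i) (c j))
        = (Matrix.of fun i (x : Fin (N + 2)) => hess d h (r i) x)
          * Matrix.of fun (x : Fin (N + 2)) j => oneDirectSum (riordan (mk d) (mk h)) x (c j) := by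
      ext i j
      exact riordan_eq_sum_hess_mul_oneDirectSum d h (le_sup (mem_univ i)) (c j)
    rw [hfactor]
    refine det_mul_nonneg_of_minors_nonneg _ _ (fun f hf => ?_) fun f hf => ?_
    · exact hH k r _ hr (Fin.val_strictMono.comp hf)
    · exact ih.oneDirectSum k _ c (Fin.val_strictMono.comp hf) hc hcm

theorem stmt0 (d h : ℕ → ℝ)
    (hH : TotallyPos (hess d h)) :
    TotallyPos (riordan (PowerSeries.mk d) (PowerSeries.mk h)) :=
  .of_forall_totallyPosOnCols (totallyPosOnCols_riordan d h hH)
end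
end

section
/- Let R = [r_{n,k}] be the Riordan array R(d(t), h(t)), let R[n] denote the submatrix of R consisting of its first n+1 columns, and let H be the matrix with H_{i,0} = d_i and H_{i,j} = h_{i-j+1} for j ≥ 1 (with h_m = 0 for m < 0). Then R[n+1] = H · (1 ⊕ R[n]), where 1 ⊕ R[n] is the block diagonal matrix with a 1×1 block equal to 1 followed by R[n]. -/
/-!
Since `d * h ^ (k + 1) = (d * h ^ k) * h`, column `k + 1` of the Riordan array is the
convolution of column `k` with the coefficients of `h`, and that convolution is row `i` of the
Hessenberg matrix against the shifted column of `1 ⊕ R`. Column `0` is `d` on both sides.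
-/

open PowerSeries

noncomputable section

/-- The block matrix 1 ⊕ R[n] viewed as an infinite-by-(n+2) array, extended by the
Riordan entries; entry (j,k) for the product identity. -/
def oplusRiordan (d h : PowerSeries ℝ) (j k : ℕ) : ℝ :=
  if j = 0 then (if k = 0 then 1 else 0)
  else if k = 0 then 0 else riordan d h (j - 1) (k - 1)


theorem riordan_zero_right (d h : PowerSeries ℝ) (i : ℕ) : riordan d h i 0 = coeff i d := by
  simp [riordan]

theorem riordan_succ_right (d h : PowerSeries ℝ) (i m : ℕ) :
    riordan d h i (m + 1) = ∑ s ∈ Finset.range (i + 1), coeff (i - s) h * riordan d h s m := by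
  rw [riordan, pow_succ, ← mul_assoc, coeff_mul,
    Finset.Nat.sum_antidiagonal_eq_sum_range_succ (fun a b => coeff a (d * h ^ m) * coeff b h)]
  exact Finset.sum_congr rfl fun s _ => mul_comm _ _

theorem sum_hess_mul_oplusRiordan_zero (d h : PowerSeries ℝ) (i : ℕ) :
    ∑ j ∈ Finset.range (i + 2), hess (fun m => coeff m d) (fun m => coeff m h) i j *
      oplusRiordan d h j 0 = coeff i d := by
  rw [Finset.sum_range_succ']
  simp [oplusRiordan, hess]

theorem sum_hess_mul_oplusRiordan_succ (d h : PowerSeries ℝ) (i m : ℕ) :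
    ∑ j ∈ Finset.range (i + 2), hess (fun m => coeff m d) (fun m => coeff m h) i j *
      oplusRiordan d h j (m + 1) =
      ∑ s ∈ Finset.range (i + 1), coeff (i - s) h * riordan d h s m := by
  rw [Finset.sum_range_succ']
  simp only [oplusRiordan, hess, Nat.add_one_ne_zero, if_false, if_true, Nat.add_sub_cancel,
    mul_zero, add_zero]
  refine Finset.sum_congr rfl fun s hs => ?_
  rw [if_pos (by simp at hs; omega), Nat.add_sub_add_right]

theorem stmt1 (d h : PowerSeries ℝ) (n : ℕ) :
    ∀ i k, k ≤ n + 1 →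
      riordan d h i k =
        ∑ j ∈ Finset.range (i + 2), hess (fun m => coeff m d) (fun m => coeff m h) i j *
          oplusRiordan d h j k := by
  rintro i (_ | m) -
  · rw [sum_hess_mul_oplusRiordan_zero, riordan_zero_right]
  · rw [sum_hess_mul_oplusRiordan_succ, riordan_succ_right]
end
end

section
/- Let h(t) = Σ_{n≥0} h_n t^n be such that t divides h(t) and the coefficient sequence (h_n) is a Pólya frequency sequence. Then the Bell-type Riordan array R(h(t)/t, h(t)), i.e. the matrix whose (n,k)-entry is the coefficient of t^{n+1} in h(t)^{k+1}, is totally positive. -/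
open PowerSeries

noncomputable section

section CB
open Finset Equiv Matrix

/-- The finset of strictly monotone maps `Fin k → Fin N`. -/
def smSet (k N : ℕ) : Finset (Fin k → Fin N) :=
  Finset.univ.filter fun s => StrictMono s

lemma mem_smSet {k N : ℕ} {s : Fin k → Fin N} : s ∈ smSet k N ↔ StrictMono s := by
  simp [smSet]

lemma cauchy_binet {k N : ℕ} (A : Matrix (Fin k) (Fin N) ℝ) (B : Matrix (Fin N) (Fin k) ℝ) :
    (A * B).det = ∑ s ∈ smSet k N, (A.submatrix id s).det * (B.submatrix s id).det := by
  classical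
  have step1 : (A * B).det
      = ∑ p : Fin k → Fin N, (∏ j, B (p j) j) * (A.submatrix id p).det := by
    calc (A * B).det
        = ∑ σ : Perm (Fin k), ∑ p : Fin k → Fin N,
            (Perm.sign σ : ℤ) * ∏ i, A (σ i) (p i) * B (p i) i := by
          simp only [det_apply', mul_apply, prod_univ_sum, mul_sum, Fintype.piFinset_univ]
      _ = ∑ p : Fin k → Fin N, ∑ σ : Perm (Fin k),
            (Perm.sign σ : ℤ) * ∏ i, A (σ i) (p i) * B (p i) i := by
          rw [Finset.sum_comm]
      _ = ∑ p : Fin k → Fin N, (∏ j, B (p j) j) * (A.submatrix id p).det := by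
          refine Finset.sum_congr rfl fun p _ => ?_
          rw [det_apply', Finset.mul_sum]
          refine Finset.sum_congr rfl fun σ _ => ?_
          simp only [submatrix_apply, id_eq, prod_mul_distrib]
          ring
  have step2 : (A * B).det
      = ∑ p ∈ Finset.univ.filter (fun p : Fin k → Fin N => Function.Injective p),
          (∏ j, B (p j) j) * (A.submatrix id p).det := by
    rw [step1]
    symm
    apply Finset.sum_subset (Finset.filter_subset _ _)
    intro p _ hp
    have hpinj : ¬ Function.Injective p := by simpa using hp
    rw [Function.not_injective_iff] at hpinj
    obtain ⟨i, j, hij, hne⟩ := hpinj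
    have : (A.submatrix id p).det = 0 := by
      apply det_zero_of_column_eq hne
      intro l; simp [hij]
    simp [this]
  rw [step2]
  have key : ∑ p ∈ Finset.univ.filter (fun p : Fin k → Fin N => Function.Injective p),
          (∏ j, B (p j) j) * (A.submatrix id p).det
      = ∑ x ∈ (smSet k N) ×ˢ (Finset.univ : Finset (Perm (Fin k))),
          (∏ j, B (x.1 (x.2 j)) j) * ((Perm.sign x.2 : ℤ) * (A.submatrix id x.1).det) := by
    refine Finset.sum_bij' (fun p _ => (p ∘ Tuple.sort p, (Tuple.sort p)⁻¹))
      (fun x _ => x.1 ∘ x.2) ?_ ?_ ?_ ?_ ?_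
    · -- maps into product
      intro p hp
      have hpinj : Function.Injective p := by simpa using hp
      rw [Finset.mem_product]
      refine ⟨mem_smSet.mpr ?_, mem_univ _⟩
      exact (Tuple.monotone_sort p).strictMono_of_injective
        (hpinj.comp (Tuple.sort p).injective)
    · -- maps into injective
      intro x hx
      have hs : StrictMono x.1 := mem_smSet.mp (Finset.mem_product.mp hx).1
      simpa using hs.injective.comp x.2.injective
    · -- left inverse
      intro p hp
      funext j
      simp
    · -- right inverse
      intro x hx
      obtain ⟨s, σ⟩ := x
      have hs : StrictMono s := mem_smSet.mp (Finset.mem_product.mp hx).1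
      have hinj : Function.Injective (s ∘ σ) := hs.injective.comp σ.injective
      have hs' : StrictMono ((s ∘ σ) ∘ Tuple.sort (s ∘ σ)) :=
        (Tuple.monotone_sort (s ∘ σ)).strictMono_of_injective
          (hinj.comp (Tuple.sort (s ∘ σ)).injective)
      have hrange : Set.range ((s ∘ σ) ∘ Tuple.sort (s ∘ σ)) = Set.range s := by
        rw [Function.Surjective.range_comp (Tuple.sort (s ∘ σ)).surjective,
          Function.Surjective.range_comp σ.surjective]
      haveI : WellFoundedLT (Fin k) := Finite.to_wellFoundedLT
      have hseq : (s ∘ σ) ∘ Tuple.sort (s ∘ σ) = s := (hs'.range_inj hs).mp hrange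
      have hσ : σ ∘ (Tuple.sort (s ∘ σ)) = id := by
        funext j
        apply hs.injective
        have := congrFun hseq j
        simpa using this
      have hsort : (Tuple.sort (s ∘ σ))⁻¹ = σ := by
        ext j
        have h5 := congrFun hσ ((Tuple.sort (s ∘ σ))⁻¹ j)
        simp only [Function.comp_apply, id_eq, Equiv.Perm.inv_def, Equiv.apply_symm_apply] at h5
        exact (congrArg Fin.val h5).symm
      exact Prod.ext hseq hsort
    · -- summands agree
      intro p hp
      have hc : (p ∘ Tuple.sort p) ∘ ((Tuple.sort p)⁻¹ : Perm (Fin k)) = p := by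
        funext j; simp
      have h2 : (A.submatrix id (p ∘ Tuple.sort p)).submatrix id ((Tuple.sort p)⁻¹ : Perm (Fin k))
          = A.submatrix id p := by
        rw [submatrix_submatrix, hc]
        simp
      have h3 : (Perm.sign ((Tuple.sort p)⁻¹ : Perm (Fin k)) : ℤ)
            * (A.submatrix id (p ∘ Tuple.sort p)).det
          = (A.submatrix id p).det := by
        rw [← det_permute' _ (A.submatrix id (p ∘ Tuple.sort p)), h2]
      calc (∏ j, B (p j) j) * (A.submatrix id p).det
          = (∏ j, B ((p ∘ Tuple.sort p) (((Tuple.sort p)⁻¹ : Perm (Fin k)) j)) j)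
            * ((Perm.sign ((Tuple.sort p)⁻¹ : Perm (Fin k)) : ℤ)
              * (A.submatrix id (p ∘ Tuple.sort p)).det) := by
            rw [h3]
            congr 1
            refine Finset.prod_congr rfl fun j _ => ?_
            simp
        _ = _ := rfl
  rw [key, Finset.sum_product]
  refine Finset.sum_congr rfl fun s hs => ?_
  rw [det_apply' (B.submatrix s id), Finset.mul_sum]
  refine Finset.sum_congr rfl fun σ _ => ?_
  simp only [Function.comp_apply, submatrix_apply, id_eq]
  ring


end CB

section PS

variable (h : PowerSeries ℝ)

lemma conv0 (m1 m2 d : ℕ) :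
    ∑ t ∈ Finset.range (d + 1), coeff (d - t) (h ^ m1) * coeff t (h ^ m2)
      = coeff d (h ^ (m1 + m2)) := by
  rw [pow_add, mul_comm (h ^ m1), PowerSeries.coeff_mul,
    Finset.Nat.sum_antidiagonal_eq_sum_range_succ_mk]
  exact (Finset.sum_congr rfl fun t _ => mul_comm _ _).symm

lemma conv2 (m1 m2 n c N : ℕ) (hn : n < N) :
    ∑ s : Fin N, toeplitz (fun t => coeff t (h ^ m1)) n (s : ℕ)
        * toeplitz (fun t => coeff t (h ^ m2)) (s : ℕ) c
      = toeplitz (fun t => coeff t (h ^ (m1 + m2))) n c := by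
  rw [Fin.sum_univ_eq_sum_range (fun s =>
    toeplitz (fun t => coeff t (h ^ m1)) n s * toeplitz (fun t => coeff t (h ^ m2)) s c)]
  by_cases hcn : c ≤ n
  · have hsub : Finset.Icc c n ⊆ Finset.range N := by
      intro s hs
      rw [Finset.mem_Icc] at hs
      rw [Finset.mem_range]
      omega
    rw [← Finset.sum_subset hsub]
    · have hIcc : ∀ s ∈ Finset.Icc c n,
          toeplitz (fun t => coeff t (h ^ m1)) n s * toeplitz (fun t => coeff t (h ^ m2)) s c
          = coeff (n - s) (h ^ m1) * coeff (s - c) (h ^ m2) := by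
        intro s hs
        rw [Finset.mem_Icc] at hs
        unfold toeplitz
        rw [if_pos hs.2, if_pos hs.1]
      rw [Finset.sum_congr rfl hIcc, ← Finset.Ico_add_one_right_eq_Icc, Finset.sum_Ico_eq_sum_range]
      unfold toeplitz
      rw [if_pos hcn]
      show _ = coeff (n - c) (h ^ (m1 + m2))
      rw [← conv0 h m1 m2 (n - c)]
      have hrange : n + 1 - c = n - c + 1 := by omega
      rw [hrange]
      refine Finset.sum_congr rfl fun t ht => ?_
      rw [Finset.mem_range] at ht
      congr 2
      · exact congrArg (PowerSeries.coeff) (by omega)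
      · exact congrArg (PowerSeries.coeff) (by omega)
    · intro s hsr hsI
      rw [Finset.mem_range] at hsr
      rw [Finset.mem_Icc] at hsI
      unfold toeplitz
      split_ifs with h1 h2 <;> first | (exfalso; omega) | ring
  · unfold toeplitz
    rw [if_neg hcn]
    apply Finset.sum_eq_zero
    intro s hs
    split_ifs with h1 h2 <;> first | (exfalso; omega) | ring

lemma conv1 (m1 m2 n N : ℕ) (hn : n < N) :
    ∑ s : Fin N, toeplitz (fun t => coeff t (h ^ m1)) n (s : ℕ) * coeff (s : ℕ) (h ^ m2)
      = coeff n (h ^ (m1 + m2)) := by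
  have := conv2 h m1 m2 n 0 N hn
  unfold toeplitz at this ⊢
  simpa using this

lemma toeplitz_pow_TP (hPF : TotallyPos (toeplitz (fun n => coeff n h))) :
    ∀ m, 1 ≤ m → TotallyPos (toeplitz (fun n => coeff n (h ^ m))) := by
  intro m
  induction m with
  | zero => omega
  | succ m IH =>
    intro _ k r c hr hc
    by_cases hm : m = 0
    · subst hm
      simpa [pow_one] using hPF k r c hr hc
    rcases Nat.eq_zero_or_pos k with hk | hk
    · subst hk
      rw [Matrix.det_isEmpty]
      norm_num
    obtain ⟨k', rfl⟩ : ∃ k', k = k' + 1 := ⟨k - 1, by omega⟩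
    set N := r (Fin.last k') + 1 with hN
    have hrN : ∀ i, r i < N := fun i =>
      Nat.lt_succ_of_le (hr.monotone (Fin.le_last i))
    set A : Matrix (Fin (k' + 1)) (Fin N) ℝ :=
      Matrix.of fun i s => toeplitz (fun t => coeff t (h ^ 1)) (r i) (s : ℕ) with hA
    set B : Matrix (Fin N) (Fin (k' + 1)) ℝ :=
      Matrix.of fun s j => toeplitz (fun t => coeff t (h ^ m)) (s : ℕ) (c j) with hB
    have hfac : (Matrix.of fun i j =>
        toeplitz (fun n => coeff n (h ^ (m + 1))) (r i) (c j)) = A * B := by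
      ext i j
      rw [Matrix.mul_apply]
      have := conv2 h 1 m (r i) (c j) N (hrN i)
      rw [Matrix.of_apply]
      rw [show m + 1 = 1 + m by omega]
      exact this.symm
    rw [hfac, cauchy_binet]
    apply Finset.sum_nonneg
    intro s hs
    have hsm : StrictMono s := mem_smSet.mp hs
    have hsv : StrictMono fun j => ((s j : ℕ)) := fun a b hab => hsm hab
    apply mul_nonneg
    · have := hPF (k' + 1) r (fun j => (s j : ℕ)) hr hsv
      have he : (A.submatrix id s) = Matrix.of fun i j =>
          toeplitz (fun n => coeff n h) (r i) ((s j : ℕ)) := by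
        ext i j
        simp [hA, toeplitz, pow_one]
      rw [he]
      exact this
    · have := IH (by omega) (k' + 1) (fun i => (s i : ℕ)) c hsv hc
      exact this

end PS

section Main

variable (h : PowerSeries ℝ)

lemma mainL (h0 : constantCoeff h = 0)
    (hPF : TotallyPos (toeplitz (fun n => coeff n h))) :
    ∀ k (r c : Fin k → ℕ), StrictMono r → StrictMono c →
      0 ≤ (Matrix.of fun i j => coeff (r i) (h ^ (c j))).det := by
  intro k
  induction k with
  | zero =>
    intro r c _ _
    rw [Matrix.det_isEmpty]
    norm_num
  | succ k IH =>
    have coeff_zero_pow : ∀ m, 1 ≤ m → coeff 0 (h ^ m) = 0 := by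
      intro m hm
      rw [coeff_zero_eq_constantCoeff, map_pow, h0, zero_pow (by omega)]
    have key : ∀ (r c : Fin (k + 1) → ℕ), StrictMono r → StrictMono c → c 0 = 0 →
        0 ≤ (Matrix.of fun i j => coeff (r i) (h ^ (c j))).det := by
      intro r c hr hc hc0
      by_cases hr0 : r 0 = 0
      · rw [Matrix.det_succ_row_zero]
        have hz : ∀ j ∈ Finset.univ, j ≠ (0 : Fin (k + 1)) →
            (-1 : ℝ) ^ (j : ℕ) * (Matrix.of fun i j => coeff (r i) (h ^ (c j))) 0 j
              * ((Matrix.of fun i j => coeff (r i) (h ^ (c j))).submatrix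
                  Fin.succ j.succAbove).det = 0 := by
          intro j _ hj
          have hcj : 1 ≤ c j := by
            have h1 := hc (Fin.pos_of_ne_zero hj)
            omega
          have hco : coeff (r 0) (h ^ (c j)) = 0 := by
            rw [hr0]
            exact coeff_zero_pow _ hcj
          simp [hco]
        rw [Finset.sum_eq_single_of_mem (0 : Fin (k + 1)) (Finset.mem_univ _) hz]
        simp only [Fin.val_zero, pow_zero, one_mul, Matrix.of_apply, Fin.succAbove_zero]
        have h00 : coeff (r 0) (h ^ (c 0)) = 1 := by
          rw [hr0, hc0, pow_zero, coeff_zero_eq_constantCoeff, map_one]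
        rw [h00, one_mul]
        exact IH (fun i => r i.succ) (fun j => c j.succ)
          (fun a b hab => hr (Fin.succ_lt_succ_iff.mpr hab))
          (fun a b hab => hc (Fin.succ_lt_succ_iff.mpr hab))
      · apply le_of_eq
        symm
        apply Matrix.det_eq_zero_of_column_eq_zero 0
        intro i
        have hri : r i ≠ 0 := by
          have := hr.monotone (Fin.zero_le i)
          omega
        simp only [Matrix.of_apply, hc0, pow_zero]
        rw [PowerSeries.coeff_one]
        simp [hri]
    intro r c hr hc
    by_cases hc0 : c 0 = 0
    · exact key r c hr hc hc0
    · set N := r (Fin.last k) + 1 with hN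
      have hrN : ∀ i, r i < N := fun i => Nat.lt_succ_of_le (hr.monotone (Fin.le_last i))
      set A : Matrix (Fin (k + 1)) (Fin N) ℝ :=
        Matrix.of fun i s => toeplitz (fun t => coeff t (h ^ (c 0))) (r i) (s : ℕ) with hA
      set B : Matrix (Fin N) (Fin (k + 1)) ℝ :=
        Matrix.of fun s j => coeff (s : ℕ) (h ^ (c j - c 0)) with hB
      have hfac : (Matrix.of fun i j => coeff (r i) (h ^ (c j))) = A * B := by
        ext i j
        rw [Matrix.mul_apply, Matrix.of_apply]
        have hle : c 0 ≤ c j := hc.monotone (Fin.zero_le j)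
        have hcv := conv1 h (c 0) (c j - c 0) (r i) N (hrN i)
        rw [show c 0 + (c j - c 0) = c j by omega] at hcv
        exact hcv.symm
      rw [hfac, cauchy_binet]
      apply Finset.sum_nonneg
      intro s hs
      have hsm : StrictMono s := mem_smSet.mp hs
      have hsv : StrictMono fun j => ((s j : ℕ)) := fun a b hab => hsm hab
      apply mul_nonneg
      · exact toeplitz_pow_TP h hPF (c 0) (by omega) (k + 1) r (fun j => (s j : ℕ)) hr hsv
      · have hc' : StrictMono fun j => c j - c 0 := by
          intro a b hab
          have h1 : c a < c b := hc hab
          have h2 : c 0 ≤ c a := hc.monotone (Fin.zero_le a)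
          show c a - c 0 < c b - c 0
          omega
        exact key (fun i => (s i : ℕ)) (fun j => c j - c 0) hsv hc'
          (by show c 0 - c 0 = 0; omega)

theorem stmt8 (h : PowerSeries ℝ) (h0 : constantCoeff h = 0)
    (hPF : TotallyPos (toeplitz (fun n => coeff n h))) :
    TotallyPos (fun n k => coeff (n + 1) (h ^ (k + 1))) := by
  intro k r c hr hc
  exact mainL h h0 hPF k (fun i => r i + 1) (fun j => c j + 1)
    (fun a b hab => by have := hr hab; show r a + 1 < r b + 1; omega)
    (fun a b hab => by have := hc hab; show c a + 1 < c b + 1; omega)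

end Main
end
end

section
/- The Lucas matrix L = [L_{n,k}]_{n,k≥0}, where L_{n,k} is the coefficient of x^k in the n-th Lucas polynomial, equals the Riordan array R((2−t)/(1−t), t²/(1−t)); that is, for every k ≥ 0, the generating function Σ_{n≥0} L_{n,k} t^n equals ((2−t)/(1−t))·(t²/(1−t))^k. -/
open PowerSeries

noncomputable section

/-- Lucas polynomials: L₀ = 2, L₁ = 1, L_{n+2} = L_{n+1} + x·L_n. -/
def lucas : ℕ → Polynomial ℝ
  | 0 => 2
  | 1 => 1
  | n + 2 => lucas (n + 1) + Polynomial.X * lucas n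

/-! The Lucas recurrence gives `L_{n+2,k+1} = L_{n+1,k+1} + L_{n,k}`, so the column generating
functions satisfy `(1 - t) G_{k+1} = t² G_k`, i.e. `G_{k+1} = h G_k`; and `G_0 = d` because the
constant terms of the Lucas polynomials are `2, 1, 1, …`. -/

namespace PowerSeries

theorem mk_ite_le_one_zero_one {R : Type*} [Semiring R] :
    mk (fun n => if n ≤ 1 then (0 : R) else 1) = X ^ 2 * mk 1 := by
  ext (_ | _ | n) <;> simp [coeff_X_pow_mul']

variable {R : Type*} [CommRing R]

theorem one_sub_X_mul_mk_of_recurrence {a b : ℕ → R} (h0 : a 0 = 0) (h1 : a 1 = 0)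
    (h : ∀ n, a (n + 2) = a (n + 1) + b n) : (1 - X) * mk a = X ^ 2 * mk b := by
  ext (_ | _ | n) <;> simp [sub_mul, coeff_succ_X_mul, coeff_X_pow_mul', h0, h1, h]

theorem mk_eq_X_sq_mul_mk_one_mul_of_recurrence {a b : ℕ → R} (h0 : a 0 = 0) (h1 : a 1 = 0)
    (h : ∀ n, a (n + 2) = a (n + 1) + b n) : mk a = X ^ 2 * mk 1 * mk b := by
  rw [← one_mul (mk a), ← mk_one_mul_one_sub_eq_one, mul_assoc,
    one_sub_X_mul_mk_of_recurrence h0 h1 h]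
  ring

end PowerSeries

theorem lucas_coeff_zero (n : ℕ) : (lucas n).coeff 0 = if n = 0 then 2 else 1 := by
  induction n using Nat.twoStepInduction <;> simp [lucas, *]

theorem lucas_add_two_coeff_succ (n k : ℕ) :
    (lucas (n + 2)).coeff (k + 1) = (lucas (n + 1)).coeff (k + 1) + (lucas n).coeff k := by
  simp [lucas]

theorem mk_lucas_coeff_succ (k : ℕ) :
    mk (fun n => (lucas n).coeff (k + 1)) =
      mk (fun n => if n ≤ 1 then (0 : ℝ) else 1) * mk (fun n => (lucas n).coeff k) := by
  rw [mk_ite_le_one_zero_one, mk_eq_X_sq_mul_mk_one_mul_of_recurrence (by simp [lucas])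
    (by simp [lucas, Polynomial.coeff_one]) (fun n => lucas_add_two_coeff_succ n k)]

theorem stmt12 :
    ∀ k : ℕ, PowerSeries.mk (fun n => (lucas n).coeff k) =
      PowerSeries.mk (fun n => if n = 0 then (2 : ℝ) else 1) *
        (PowerSeries.mk (fun n => if n ≤ 1 then (0 : ℝ) else 1)) ^ k := by
  intro k
  induction k with
  | zero => simp [lucas_coeff_zero]
  | succ k ih => rw [mk_lucas_coeff_succ, ih]; ring
end
end

section
/- The infinite matrix H with first column (2, 1, 1, 1, ...) and, for j ≥ 1, (i,j)-entry equal to 1 if i ≥ j+1 and 0 otherwise (i.e., the Hessenberg matrix built from d(t) = (2−t)/(1−t) and h(t) = t²/(1−t)) is totally positive. -/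
open PowerSeries

noncomputable section

/-!
Every row of `H` other than row `0` is the indicator of `{j | j < i}`, and row `0` is `2 • e₀`.
Expanding a minor along row `0`, when that row is chosen, therefore leaves a minor of the 0/1 matrix
`[c j < r i]` with `r`, `c` monotone, whose determinant is `0` or `1` by induction: either two
rows coincide, the last column vanishes, or the last column is a unit vector.
-/

theorem det_indicator_lt_nonneg {R α : Type*} [CommRing R] [LinearOrder R] [IsStrictOrderedRing R]
    [LinearOrder α] : ∀ {k : ℕ} (r c : Fin k → α), Monotone r → Monotone c →
    0 ≤ (Matrix.of fun i j => if c j < r i then (1 : R) else 0).det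
  | 0, _, _, _, _ => by simp
  | k + 1, r, c, hr, hc => by
    by_cases hcol : ∃ i, c (Fin.last k) < r i
    · obtain ⟨i₀, hi₀⟩ := hcol
      have hlast : c (Fin.last k) < r (Fin.last k) := hi₀.trans_le (hr (Fin.le_last i₀))
      by_cases hrow : ∃ i ≠ Fin.last k, c (Fin.last k) < r i
      · -- rows `i` and `last k` are then both identically `1`
        obtain ⟨i, hi, hlt⟩ := hrow
        refine (Matrix.det_zero_of_row_eq hi (funext fun j => ?_)).ge
        have hcj := hc (Fin.le_last j)
        simp [(hcj.trans_lt hlt), (hcj.trans_lt hlast)]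
      · push Not at hrow
        rw [Matrix.det_succ_column _ (Fin.last k), Finset.sum_eq_single (Fin.last k)]
        · simp only [Fin.val_last, ← two_mul, pow_mul, even_two, Even.neg_pow, one_pow,
            Matrix.of_apply, hlast, ↓reduceIte, mul_one, Fin.succAbove_last, one_mul]
          exact det_indicator_lt_nonneg (R := R) (r ∘ Fin.castSucc) (c ∘ Fin.castSucc)
              (hr.comp Fin.strictMono_castSucc.monotone)
              (hc.comp Fin.strictMono_castSucc.monotone)
        · intro i _ hi
          simp [(hrow i hi).not_gt]
        · simp
    · push Not at hcol
      exact (Matrix.det_eq_zero_of_column_eq_zero (Fin.last k) fun i => by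
        simp [(hcol i).not_gt]).ge

abbrev H : ℕ → ℕ → ℝ := hess (fun n => if n = 0 then 2 else 1) (fun n => if n ≤ 1 then 0 else 1)

lemma H_apply_of_pos {i : ℕ} (hi : 0 < i) (j : ℕ) : H i j = if j < i then 1 else 0 := by
  simp only [H, hess]
  split_ifs <;> first | rfl | omega

lemma H_zero_apply (j : ℕ) : H 0 j = if j = 0 then 2 else 0 := by
  simp only [H, hess]
  split_ifs <;> first | rfl | omega

lemma det_H_minor_nonneg_of_pos {k : ℕ} (r c : Fin k → ℕ) (hr : Monotone r)
    (hc : Monotone c) (hr₀ : ∀ i, 0 < r i) : 0 ≤ (Matrix.of fun i j => H (r i) (c j)).det := by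
  simpa only [H_apply_of_pos (hr₀ _)] using det_indicator_lt_nonneg (R := ℝ) r c hr hc

theorem stmt13 :
    TotallyPos (hess (fun n => if n = 0 then 2 else 1) (fun n => if n ≤ 1 then 0 else 1)) := by
  show TotallyPos H
  rintro (_ | k) r c hr hc
  · simp
  by_cases hr0 : r 0 = 0
  · rw [Matrix.det_succ_row_zero, Finset.sum_eq_single 0 (fun j _ hj => ?_) (by simp)]
    · simp only [Fin.coe_ofNat_eq_mod, Nat.zero_mod, pow_zero, Matrix.of_apply, one_mul,
        Fin.succAbove_zero]
      refine mul_nonneg (by rw [hr0, H_zero_apply]; positivity) ?_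
      exact det_H_minor_nonneg_of_pos (r ∘ Fin.succ) (c ∘ Fin.succ)
        (hr.comp Fin.strictMono_succ).monotone (hc.comp Fin.strictMono_succ).monotone
        fun i => (Nat.zero_le _).trans_lt (hr (Fin.succ_pos i))
    · have hcj : c j ≠ 0 := ((Nat.zero_le _).trans_lt (hc (Fin.pos_iff_ne_zero.2 hj))).ne'
      simp [hr0, H_zero_apply, hcj]
  · exact det_H_minor_nonneg_of_pos r c hr.monotone hc.monotone
      fun i => (Nat.pos_of_ne_zero hr0).trans_le (hr.monotone (Fin.zero_le i))
end
end

section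
/- The Lucas matrix [L_{n,k}]_{n,k≥0}, whose entries are the coefficients of the Lucas polynomials, is totally positive. -/
open PowerSeries

noncomputable section

/-!
Let `T_K` be the Lucas matrix with its columns `k ≥ K` replaced by zero, so `T_0 = 0` and every
minor of the Lucas matrix is a minor of some `T_K`. The recurrence `L_{n+1,k+1} = ∑_{m<n} L_{m,k}`
builds `T_{K+1}` from `T_K` by three operations that preserve total positivity: bordering with a
corner `1` (Laplace expansion along the first row), replacing every row by the sum of the rows up to
it (an iterate of adding a row to the next one, which by multilinearity splits a minor into two
minors of the old matrix), and shifting the rows down by one while doubling row `0`.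
-/

open Finset Matrix

section

variable {M : ℕ → ℕ → ℝ}

theorem totallyPos_zero : TotallyPos fun _ _ => 0 := by
  intro s r c _ _
  cases s with
  | zero => simp
  | succ t => exact det_zero.ge

theorem totallyPos_of_forall_eqOn
    (h : ∀ R, ∃ N, TotallyPos N ∧ ∀ i ≤ R, ∀ j ≤ R, M i j = N i j) : TotallyPos M := by
  intro s r c hr hc
  obtain ⟨N, hN, hMN⟩ := h (univ.sup r ⊔ univ.sup c)
  have hminor : (Matrix.of fun i j => M (r i) (c j)) = Matrix.of fun i j => N (r i) (c j) :=
    Matrix.ext fun i j => hMN _ (le_sup_of_le_left (le_sup (mem_univ i))) _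
      (le_sup_of_le_right (le_sup (mem_univ j)))
  rw [hminor]
  exact hN s r c hr hc

theorem TotallyPos.comp_monotone (hM : TotallyPos M) {f g : ℕ → ℕ} (hf : Monotone f)
    (hg : Monotone g) : TotallyPos fun i j => M (f i) (g j) := by
  intro s r c hr hc
  by_cases hfr : Function.Injective (f ∘ r)
  · by_cases hgc : Function.Injective (g ∘ c)
    · exact hM s _ _ ((hf.comp hr.monotone).strictMono_of_injective hfr)
        ((hg.comp hc.monotone).strictMono_of_injective hgc)
    · obtain ⟨j, j', hjj', hne⟩ : ∃ j j', g (c j) = g (c j') ∧ j ≠ j' := by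
        simpa [Function.Injective] using hgc
      exact (det_zero_of_column_eq hne fun i => by simp [hjj']).ge
  · obtain ⟨i, i', hii', hne⟩ : ∃ i i', f (r i) = f (r i') ∧ i ≠ i' := by
      simpa [Function.Injective] using hfr
    exact (det_zero_of_row_eq hne (by ext j; simp [hii'])).ge

theorem TotallyPos.mul_left (hM : TotallyPos M) {w : ℕ → ℝ} (hw : ∀ i, 0 ≤ w i) :
    TotallyPos fun i j => w i * M i j := by
  intro s r c hr hc
  have hprod := mul_nonneg (prod_nonneg (s := univ) fun i _ => hw (r i)) (hM s r c hr hc)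
  rwa [← det_mul_column] at hprod

def addRow (M : ℕ → ℕ → ℝ) (m : ℕ) : ℕ → ℕ → ℝ :=
  Function.update M (m + 1) (M m + M (m + 1))

theorem TotallyPos.addRow (hM : TotallyPos M) (m : ℕ) : TotallyPos (_root_.addRow M m) := by
  intro s r c hr hc
  set A := Matrix.of fun i j => M (r i) (c j)
  by_cases h : ∃ i₀, r i₀ = m + 1
  · obtain ⟨i₀, hi₀⟩ := h
    have hne : ∀ i ≠ i₀, r i ≠ m + 1 := fun i hi => hi₀ ▸ hr.injective.ne hi
    have hsplit : (Matrix.of fun i j => _root_.addRow M m (r i) (c j)) =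
        A.updateRow i₀ ((fun j => M m (c j)) + A i₀) := by
      ext i j
      rcases eq_or_ne i i₀ with rfl | hi
      · simp [_root_.addRow, hi₀, A]
      · simp [_root_.addRow, hne i hi, hi, A]
    -- the new summand is a minor of `M` with the row index `m + 1` moved down to `m`
    set φ : ℕ → ℕ := fun n => if n = m + 1 then m else n
    have hφ : Monotone φ := by
      intro a b hab
      simp only [φ]
      split_ifs <;> omega
    have hφA : A.updateRow i₀ (fun j => M m (c j)) = Matrix.of fun i j => M (φ (r i)) (c j) := by
      ext i j
      rcases eq_or_ne i i₀ with rfl | hi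
      · simp [φ, hi₀]
      · simp [φ, hne i hi, hi, A]
    rw [hsplit, det_updateRow_add, updateRow_eq_self, hφA]
    exact add_nonneg (hM.comp_monotone hφ monotone_id s r c hr hc) (hM s r c hr hc)
  · push Not at h
    have hsame : (Matrix.of fun i j => _root_.addRow M m (r i) (c j)) = A := by
      ext i j
      simp [_root_.addRow, h i, A]
    rw [hsame]
    exact hM s r c hr hc

def rowPartialSums (M : ℕ → ℕ → ℝ) (n k : ℕ) : ℝ :=
  ∑ m ∈ range (n + 1), M m k

theorem TotallyPos.rowPartialSums (hM : TotallyPos M) : TotallyPos (_root_.rowPartialSums M) := by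
  have hupTo : ∀ R, TotallyPos fun n k => if n ≤ R then _root_.rowPartialSums M n k else M n k := by
    intro R
    induction R with
    | zero =>
      convert hM using 3 with n k
      split_ifs with hn
      · simp [_root_.rowPartialSums, Nat.le_zero.mp hn]
      · rfl
    | succ R ih =>
      convert ih.addRow R using 1
      ext n k
      rcases eq_or_ne n (R + 1) with rfl | hn
      · simp [_root_.addRow, _root_.rowPartialSums, sum_range_succ _ (R + 1)]
      · have hle : n ≤ R + 1 ↔ n ≤ R := by omega
        simp only [_root_.addRow, Function.update_of_ne hn, hle]
  refine totallyPos_of_forall_eqOn fun R => ⟨_, hupTo R, fun i hi j _ => ?_⟩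
  simp [hi]

def border (M : ℕ → ℕ → ℝ) (i j : ℕ) : ℝ :=
  if i = 0 then (if j = 0 then 1 else 0) else if j = 0 then 0 else M (i - 1) (j - 1)

theorem TotallyPos.border (hM : TotallyPos M) : TotallyPos (_root_.border M) := by
  have hshift : TotallyPos fun i j => M (i - 1) (j - 1) :=
    hM.comp_monotone (fun _ _ h => Nat.sub_le_sub_right h 1) fun _ _ h => Nat.sub_le_sub_right h 1
  intro s r c hr hc
  cases s with
  | zero => simp
  | succ t =>
  have hr_pos : ∀ i ≠ 0, r i ≠ 0 := fun i hi => (hr (Fin.pos_iff_ne_zero.2 hi)).ne_bot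
  have hc_pos : ∀ j ≠ 0, c j ≠ 0 := fun j hj => (hc (Fin.pos_iff_ne_zero.2 hj)).ne_bot
  by_cases hr0 : r 0 = 0 <;> by_cases hc0 : c 0 = 0
  · -- the first row of the minor is `(1, 0, …, 0)`
    rw [det_succ_row_zero, Fintype.sum_eq_single 0 fun j hj => by
      simp [_root_.border, hr0, hc_pos j hj]]
    have hminor : (Matrix.of fun i j => _root_.border M (r i) (c j)).submatrix Fin.succ
        Fin.succ = Matrix.of fun i j => M (r i.succ - 1) (c j.succ - 1) := by
      ext i j
      simp [_root_.border, hr_pos, hc_pos, Fin.succ_ne_zero]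
    rw [Fin.succAbove_zero, hminor]
    simpa [_root_.border, hr0, hc0] using
      hshift t _ _ (hr.comp Fin.strictMono_succ) (hc.comp Fin.strictMono_succ)
  · refine (det_eq_zero_of_row_eq_zero 0 fun j => ?_).ge
    have := hc.monotone (Fin.zero_le j)
    simp [_root_.border, hr0, show c j ≠ 0 by omega]
  · refine (det_eq_zero_of_column_eq_zero 0 fun i => ?_).ge
    have := hr.monotone (Fin.zero_le i)
    simp [_root_.border, hc0, show r i ≠ 0 by omega]
  · have hminor : (Matrix.of fun i j => _root_.border M (r i) (c j)) =
        Matrix.of fun i j => M (r i - 1) (c j - 1) := by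
      ext i j
      have := hr.monotone (Fin.zero_le i)
      have := hc.monotone (Fin.zero_le j)
      simp [_root_.border, show r i ≠ 0 by omega, show c j ≠ 0 by omega]
    rw [hminor]
    exact hshift _ r c hr hc

end

theorem lucas_succ_coeff_zero (n : ℕ) : (lucas (n + 1)).coeff 0 = 1 := by
  induction n with
  | zero => simp [lucas]
  | succ n ih => simp [lucas, ih]

theorem lucas_succ_coeff_succ (n k : ℕ) :
    (lucas (n + 1)).coeff (k + 1) = ∑ m ∈ range n, (lucas m).coeff k := by
  induction n with
  | zero => simp [lucas, Polynomial.coeff_one]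
  | succ n ih => simp [lucas, sum_range_succ, ih]

def lucasTrunc (K n k : ℕ) : ℝ :=
  if k < K then (lucas n).coeff k else 0

-- At `n = 0`, `n - 1 = 0` picks the corner row `(1, 0, 0, …)` of the partial sums.
theorem lucasTrunc_succ (K : ℕ) :
    lucasTrunc (K + 1) = fun n k =>
      (if n = 0 then 2 else 1) * rowPartialSums (border (lucasTrunc K)) (n - 1) k := by
  ext (_ | n) (_ | k)
  · simp [lucasTrunc, rowPartialSums, border, lucas]
  · simp [lucasTrunc, rowPartialSums, border, lucas]
  · simp [lucasTrunc, rowPartialSums, border, lucas_succ_coeff_zero]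
  · simp [lucasTrunc, rowPartialSums, border, sum_range_succ', lucas_succ_coeff_succ]

theorem totallyPos_lucasTrunc : ∀ K, TotallyPos (lucasTrunc K)
  | 0 => by
    convert totallyPos_zero using 3
    simp [lucasTrunc]
  | K + 1 => by
    rw [lucasTrunc_succ]
    refine ((totallyPos_lucasTrunc K).border.rowPartialSums.comp_monotone
      (fun _ _ h => Nat.sub_le_sub_right h 1) monotone_id).mul_left fun n => ?_
    split_ifs <;> norm_num

theorem stmt14 : TotallyPos (fun n k => (lucas n).coeff k) :=
  totallyPos_of_forall_eqOn fun R => ⟨lucasTrunc (R + 1), totallyPos_lucasTrunc (R + 1),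
    fun i _ j hj => by simp [lucasTrunc, Nat.lt_succ_of_le hj]⟩
end
end
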